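/- arXiv:2310.04998 — 3 statements merged into one kernel-verified Lean document; each statement's English description precedes it below -/
import Mathlib

section
/- Let D̂, G, Q, P be matrices with Q, P symmetric positive definite satisfying Q D̂ = −Gᵀ P. Let u, v : ℝ → ℝⁿ be differentiable and satisfy the semi-discrete wave equation u' = v, v' = D̂ G u. Then the discrete Hamiltonian H(t) = ½(⟨v(t), v(t)⟩_Q + ⟨G u(t), G u(t)⟩_P) is constant in time, i.e., dH/dt = 0. -/
open Matrix

private lemma dot_deriv {k l : ℕ} (M : Matrix (Fin k) (Fin l) ℝ)
    (f : ℝ → Fin k → ℝ) (g : ℝ → Fin l → ℝ) (f' : Fin k → ℝ) (g' : Fin l → ℝ)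
    (t : ℝ) (hf : HasDerivAt f f' t) (hg : HasDerivAt g g' t) :
    HasDerivAt (fun s => (f s) ⬝ᵥ M.mulVec (g s))
      (f' ⬝ᵥ M.mulVec (g t) + (f t) ⬝ᵥ M.mulVec g') t := by
  have hfi := (hasDerivAt_pi.mp hf)
  have hgi := (hasDerivAt_pi.mp hg)
  have : HasDerivAt (fun s => ∑ i, f s i * ∑ j, M i j * g s j)
      (∑ i, (f' i * ∑ j, M i j * g t j + f t i * ∑ j, M i j * g' j)) t := by
    apply HasDerivAt.fun_sum
    intro i _
    exact (hfi i).mul (HasDerivAt.fun_sum (fun j _ => (hgi j).const_mul (M i j)))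
  simpa [dotProduct, mulVec, Finset.sum_add_distrib, Finset.mul_sum] using this

theorem statement3 (n m : ℕ)
    (Q : Matrix (Fin n) (Fin n) ℝ) (P : Matrix (Fin m) (Fin m) ℝ)
    (Dhat : Matrix (Fin n) (Fin m) ℝ) (G : Matrix (Fin m) (Fin n) ℝ)
    (hQ : Q.PosDef) (hP : P.PosDef)
    (hQs : Q.IsSymm) (hPs : P.IsSymm)
    (hdual : Q * Dhat = -(Gᵀ * P))
    (u v : ℝ → Fin n → ℝ)
    (hu : ∀ t, HasDerivAt u (v t) t)
    (hv : ∀ t, HasDerivAt v (Dhat.mulVec (G.mulVec (u t))) t) :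
    ∀ t : ℝ,
      deriv (fun s => (1 / 2 : ℝ) *
        ((v s) ⬝ᵥ Q.mulVec (v s)
          + (G.mulVec (u s)) ⬝ᵥ P.mulVec (G.mulVec (u s)))) t = 0 := by
  intro t
  set a := v t
  set b := G.mulVec (u t)
  have hGu : HasDerivAt (fun s => G.mulVec (u s)) (G.mulVec a) t := by
    apply hasDerivAt_pi.mpr
    intro i
    simpa [mulVec, dotProduct] using
      HasDerivAt.fun_sum (fun j _ => (hasDerivAt_pi.mp (hu t) j).const_mul (G i j))
  have h1 := dot_deriv Q v v (Dhat.mulVec b) (Dhat.mulVec b) t (hv t) (hv t)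
  have h2 := dot_deriv P (fun s => G.mulVec (u s)) (fun s => G.mulVec (u s))
    (G.mulVec a) (G.mulVec a) t hGu hGu
  have hD : HasDerivAt (fun s => (1 / 2 : ℝ) *
      ((v s) ⬝ᵥ Q.mulVec (v s)
        + (G.mulVec (u s)) ⬝ᵥ P.mulVec (G.mulVec (u s))))
      ((1 / 2 : ℝ) * ((Dhat.mulVec b ⬝ᵥ Q.mulVec a + a ⬝ᵥ Q.mulVec (Dhat.mulVec b))
        + (G.mulVec a ⬝ᵥ P.mulVec b + b ⬝ᵥ P.mulVec (G.mulVec a)))) t :=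
    (h1.add h2).const_mul _
  rw [hD.deriv]
  have hQv : ∀ x : Fin n → ℝ, x ᵥ* Q = Q *ᵥ x := by
    intro x; rw [← hQs.eq, vecMul_transpose, hQs.eq]
  have hPv : ∀ x : Fin m → ℝ, x ᵥ* P = P *ᵥ x := by
    intro x; rw [← hPs.eq, vecMul_transpose, hPs.eq]
  have sQ : Dhat *ᵥ b ⬝ᵥ Q *ᵥ a = a ⬝ᵥ Q *ᵥ (Dhat *ᵥ b) := by
    rw [dotProduct_mulVec, hQv, dotProduct_comm]
  have sP : b ⬝ᵥ P *ᵥ (G *ᵥ a) = G *ᵥ a ⬝ᵥ P *ᵥ b := by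
    rw [dotProduct_mulVec, hPv, dotProduct_comm]
  have key : a ⬝ᵥ Q *ᵥ (Dhat *ᵥ b) = -(G *ᵥ a ⬝ᵥ P *ᵥ b) := by
    rw [mulVec_mulVec, hdual, neg_mulVec, dotProduct_neg, ← mulVec_mulVec,
      dotProduct_mulVec, ← mulVec_transpose, transpose_transpose]
  rw [sQ, sP, key]
  ring
end

section
/- For an s-stage Runge–Kutta scheme with coefficients (a_{ij}), (b_i) applied to u' = f(u) with f satisfying ⟨y, f(y)⟩ = 0 for all y (conservative system), the update u^{n+1} = u^n + Δt Σ_i b_i f(y_i) with stage values y_i = u^n + Δt Σ_j a_{ij} f(y_j) satisfies ‖u^{n+1}‖² − ‖u^n‖² = −2Δt² Σ_{i,j} b_i a_{ij} ⟨f(y_j), f(y_i)⟩ + Δt² Σ_{i,j} b_i b_j ⟨f(y_j), f(y_i)⟩. -/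
/-!
Pair the stage equation for `y i` with `f (y i)`: conservativity kills `⟪y i, f (y i)⟫`, which
expresses `⟪uⁿ, f (y i)⟫` through the `a`-weighted products of the stage derivatives. Expanding
`‖uⁿ + Δt Σ bᵢ f(yᵢ)‖²` then gives `‖uⁿ‖²`, a cross term that this identity turns into the
`b a` double sum, and the square of the increment, which is the `b b` double sum.
-/

open scoped RealInnerProductSpace

section

variable {E ι : Type*} [NormedAddCommGroup E] [InnerProductSpace ℝ E] [Fintype ι]

theorem real_inner_left_of_stage_eq {u y F : E} {h : ℝ} {c : ι → ℝ} {g : ι → E}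
    (hy : y = u + h • ∑ j, c j • g j) (horth : ⟪y, F⟫ = 0) :
    ⟪u, F⟫ = -h * ∑ j, c j * ⟪g j, F⟫ := by
  rw [hy, inner_add_left, real_inner_smul_left, sum_inner] at horth
  simp only [real_inner_smul_left] at horth
  linarith

theorem norm_sum_smul_sq_real (c : ι → ℝ) (v : ι → E) :
    ‖∑ i, c i • v i‖ ^ 2 = ∑ i, ∑ j, c i * c j * ⟪v j, v i⟫ := by
  rw [← real_inner_self_eq_norm_sq, sum_inner]
  refine Finset.sum_congr rfl fun i _ => ?_
  rw [real_inner_smul_left, inner_sum, Finset.mul_sum]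
  refine Finset.sum_congr rfl fun j _ => ?_
  rw [real_inner_smul_right, real_inner_comm]
  ring

end

theorem statement8 (n s : ℕ)
    (f : EuclideanSpace ℝ (Fin n) → EuclideanSpace ℝ (Fin n))
    (hf : ∀ y, ⟪y, f y⟫ = 0)
    (a : Fin s → Fin s → ℝ) (b : Fin s → ℝ) (Δt : ℝ)
    (un : EuclideanSpace ℝ (Fin n)) (y : Fin s → EuclideanSpace ℝ (Fin n))
    (hy : ∀ i, y i = un + Δt • ∑ j, a i j • f (y j)) :
    ‖un + Δt • ∑ i, b i • f (y i)‖ ^ 2 - ‖un‖ ^ 2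
      = -2 * Δt ^ 2 * ∑ i, ∑ j, b i * a i j * ⟪f (y j), f (y i)⟫
        + Δt ^ 2 * ∑ i, ∑ j, b i * b j * ⟪f (y j), f (y i)⟫ := by
  have hstage i : ⟪un, f (y i)⟫ = -Δt * ∑ j, a i j * ⟪f (y j), f (y i)⟫ :=
    real_inner_left_of_stage_eq (hy i) (hf (y i))
  have hcross : ⟪un, Δt • ∑ i, b i • f (y i)⟫
      = -Δt ^ 2 * ∑ i, ∑ j, b i * a i j * ⟪f (y j), f (y i)⟫ := by
    simp only [real_inner_smul_right, inner_sum, hstage, Finset.mul_sum]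
    exact Finset.sum_congr rfl fun i _ => Finset.sum_congr rfl fun j _ => by ring
  rw [norm_add_sq_real, hcross, norm_smul, mul_pow, Real.norm_eq_abs, sq_abs,
    norm_sum_smul_sq_real]
  ring
end

section
/- For an s-stage Runge–Kutta method whose coefficients satisfy b_i a_{ij} + b_j a_{ji} − b_i b_j = 0 for all i, j, and a conservative system f with ⟨y, f(y)⟩ = 0, the RK update preserves the Euclidean norm exactly: ‖u^{n+1}‖ = ‖u^n‖. -/
/-!
Expanding `‖u + Δt • ∑ i, b i • k i‖²` and writing `⟪u, k i⟫ = ⟪y i, k i⟫ - Δt ∑ j a i j ⟪k j, k i⟫`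
gives, for arbitrary vectors `k i`, the energy identity
`‖u'‖² = ‖u‖² + 2 Δt ∑ i b i ⟪y i, k i⟫ - Δt² ∑ i j m i j ⟪k i, k j⟫`.
With `k i = f (y i)` the first sum vanishes because `f` is conservative, the second because `M = 0`.
-/

open scoped RealInnerProductSpace

section

variable {E ι : Type*} [NormedAddCommGroup E] [InnerProductSpace ℝ E] [Fintype ι]

theorem sum_sum_stabilityMatrix_mul_of_symm (a : ι → ι → ℝ) (b : ι → ℝ) {g : ι → ι → ℝ}
    (hg : ∀ i j, g j i = g i j) :
    ∑ i, ∑ j, (b i * a i j + b j * a j i - b i * b j) * g i j =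
      2 * ∑ i, ∑ j, b i * a i j * g j i - ∑ i, ∑ j, b i * b j * g i j := by
  have hswap : ∑ i, ∑ j, b j * a j i * g i j = ∑ i, ∑ j, b i * a i j * g j i :=
    Finset.sum_comm
  have hsymm : ∑ i, ∑ j, b i * a i j * g i j = ∑ i, ∑ j, b i * a i j * g j i := by
    simp only [hg]
  simp only [add_mul, sub_mul, Finset.sum_add_distrib, Finset.sum_sub_distrib, hswap, hsymm]
  ring

theorem norm_sq_rungeKutta_step (u : E) (k : ι → E) (a : ι → ι → ℝ) (b : ι → ℝ) (Δt : ℝ) :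
    ‖u + Δt • ∑ i, b i • k i‖ ^ 2 =
      ‖u‖ ^ 2 + 2 * Δt * ∑ i, b i * ⟪u + Δt • ∑ j, a i j • k j, k i⟫ -
        Δt ^ 2 * ∑ i, ∑ j, (b i * a i j + b j * a j i - b i * b j) * ⟪k i, k j⟫ := by
  rw [sum_sum_stabilityMatrix_mul_of_symm a b fun i j => real_inner_comm (k i) (k j)]
  have hstage : ∀ i, ⟪u + Δt • ∑ j, a i j • k j, k i⟫ =
      ⟪u, k i⟫ + Δt * ∑ j, a i j * ⟪k j, k i⟫ := by
    intro i
    simp only [inner_add_left, real_inner_smul_left, sum_inner]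
  have hsq : ‖∑ i, b i • k i‖ ^ 2 = ∑ i, ∑ j, b i * b j * ⟪k i, k j⟫ := by
    rw [← real_inner_self_eq_norm_sq, sum_inner]
    simp only [inner_sum, real_inner_smul_left, real_inner_smul_right]
    exact Finset.sum_congr rfl fun i _ => Finset.sum_congr rfl fun j _ => by ring
  rw [norm_add_sq_real, norm_smul, mul_pow, Real.norm_eq_abs, sq_abs, hsq,
    real_inner_smul_right, inner_sum]
  have hcoupling : ∑ i, b i * (Δt * ∑ j, a i j * ⟪k j, k i⟫) =
      Δt * ∑ i, ∑ j, b i * a i j * ⟪k j, k i⟫ := by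
    simp only [Finset.mul_sum]
    exact Finset.sum_congr rfl fun i _ => Finset.sum_congr rfl fun j _ => by ring
  simp only [hstage, real_inner_smul_right, mul_add, Finset.sum_add_distrib, hcoupling]
  ring

end

theorem statement9 (n s : ℕ)
    (f : EuclideanSpace ℝ (Fin n) → EuclideanSpace ℝ (Fin n))
    (hf : ∀ y, ⟪y, f y⟫ = 0)
    (a : Fin s → Fin s → ℝ) (b : Fin s → ℝ) (Δt : ℝ)
    (hM : ∀ i j, b i * a i j + b j * a j i - b i * b j = 0)
    (un : EuclideanSpace ℝ (Fin n)) (y : Fin s → EuclideanSpace ℝ (Fin n))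
    (hy : ∀ i, y i = un + Δt • ∑ j, a i j • f (y j)) :
    ‖un + Δt • ∑ i, b i • f (y i)‖ = ‖un‖ := by
  have h := norm_sq_rungeKutta_step un (fun i => f (y i)) a b Δt
  simp only [← hy, hf, hM, mul_zero, zero_mul, Finset.sum_const_zero, add_zero, sub_zero] at h
  exact (sq_eq_sq₀ (norm_nonneg _) (norm_nonneg _)).1 h
end
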